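/- Let D be an associative dialgebra over a commutative ring R, with operations ⊣ and ⊢. Then the Jordan diproduct x · y = x ⊣ y + y ⊢ x satisfies the right commutative identity: x · (y · z) = x · (z · y) for all x, y, z in D. -/
import Mathlib


/-- A pair of R-bilinear operations `l` (`⊣`) and `r` (`⊢`) on an R-module `D`
forms an associative dialgebra. -/
def IsDialgebra {R : Type*} [CommRing R] {D : Type*} [AddCommGroup D] [Module R D]
    (l r : D →ₗ[R] D →ₗ[R] D) : Prop :=
  (∀ x y z : D, l (l x y) z = l x (l y z)) ∧
  (∀ x y z : D, l x (l y z) = l x (r y z)) ∧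
  (∀ x y z : D, l (r x y) z = r x (l y z)) ∧
  (∀ x y z : D, r (l x y) z = r x (r y z)) ∧
  (∀ x y z : D, r (r x y) z = r x (r y z))

/-- The Jordan diproduct `x · y = x ⊣ y + y ⊢ x` in an associative dialgebra
satisfies the right commutative identity. -/
theorem jordanDiproduct_rightCommutative {R : Type*} [CommRing R] {D : Type*}
    [AddCommGroup D] [Module R D] (l r : D →ₗ[R] D →ₗ[R] D) (h : IsDialgebra l r)
    (m : D → D → D) (hm : ∀ x y : D, m x y = l x y + r y x) :
    ∀ x y z : D, m x (m y z) = m x (m z y) := by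
  obtain ⟨h1, h2, h3, h4, h5⟩ := h
  intro x y z
  simp only [hm, map_add, LinearMap.add_apply]
  rw [h2 x y z, ← h2 x z y, h4 y z x, h4 z y x, h5 z y x, h5 y z x]
  abel
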